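/- arXiv:1201.2501 — 3 statements merged into one kernel-verified Lean document; each statement's English description precedes it below -/
import Mathlib

section
/- If j ≢ 0 (mod n), n is a power of two, C ≥ 1, and σ is a uniformly random odd number in [n], then Pr[σj mod n ∈ [-C, C]] ≤ 4C/n. -/
/-!
Let `d = gcd (j.val, n)`. Every centred representative of a multiple of `j` is a multiple of `d`,
so a nonzero one in `[-C, C]` takes at most `2 ⌊C / d⌋` values, while by Bézout the kernel of
`σ ↦ σ * j` lies in the `d`-torsion of the cyclic group `ZMod n`, so each value is hit at most `d`
times. Hence at most `2C` residues `σ` have `σ * j` nonzero and small; for `n = 2 ^ m` the odd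
residues are units, so `σ * j ≠ 0` for them, and there are exactly `n / 2` of them.
-/

open Finset

namespace ZMod

variable {n : ℕ} [NeZero n]

theorem gcd_val_dvd_valMinAbs_mul (σ j : ZMod n) :
    ((j.val.gcd n : ℕ) : ℤ) ∣ (σ * j).valMinAbs := by
  have hcongr : ((σ * j).valMinAbs : ZMod n) = ((σ.val * j.val : ℕ) : ℤ) := by
    push_cast
    rw [natCast_zmod_val, natCast_zmod_val]
  have hn : ((j.val.gcd n : ℕ) : ℤ) ∣ n := Int.natCast_dvd_natCast.2 (Nat.gcd_dvd_right _ _)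
  have hj : ((j.val.gcd n : ℕ) : ℤ) ∣ ((σ.val * j.val : ℕ) : ℤ) :=
    Int.natCast_dvd_natCast.2 ((Nat.gcd_dvd_left _ _).mul_left _)
  have := hn.trans ((intCast_eq_intCast_iff_dvd_sub _ _ _).1 hcongr)
  simpa using (dvd_sub hj this)

theorem card_mul_eq_zero_le (j : ZMod n) : #{σ : ZMod n | σ * j = 0} ≤ j.val.gcd n := by
  refine (card_le_card fun σ hσ => ?_).trans
    (IsAddCyclic.card_nsmul_eq_zero_le (Nat.gcd_pos_of_pos_right _ (NeZero.pos n)))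
  rw [mem_filter_univ] at hσ ⊢
  have hbezout : ((j.val.gcd n : ℕ) : ZMod n) = j * (j.val.gcdA n : ZMod n) := by
    have := congrArg (fun z : ℤ => (z : ZMod n)) (Nat.gcd_eq_gcd_ab j.val n)
    push_cast at this
    rw [this, natCast_self, natCast_zmod_val]
    ring
  rw [nsmul_eq_mul, hbezout, mul_comm, ← mul_assoc, hσ, zero_mul]

theorem card_mul_eq_le (j x : ZMod n) : #{σ : ZMod n | σ * j = x} ≤ j.val.gcd n := by
  refine le_trans ?_ (card_mul_eq_zero_le j)
  rcases (filter (fun σ : ZMod n => σ * j = x) univ).eq_empty_or_nonempty with h | ⟨σ₀, hσ₀⟩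
  · simp [h]
  refine card_le_card_of_injOn (· - σ₀) (fun σ hσ => ?_) (fun a _ b _ h => sub_left_injective h)
  simp only [coe_filter, mem_filter, mem_univ, true_and, Set.mem_ofPred_eq] at hσ hσ₀ ⊢
  rw [sub_mul, hσ, hσ₀, sub_self]

theorem card_filter_mul_ne_zero_abs_valMinAbs_le (j : ZMod n) (C : ℕ) :
    #{σ : ZMod n | σ * j ≠ 0 ∧ |(σ * j).valMinAbs| ≤ C} ≤ 2 * C := by
  set d := j.val.gcd n
  have hd : (d : ℤ) ≠ 0 := by simp [d, Nat.gcd_eq_zero_iff, NeZero.ne n]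
  set q := C / d
  set S : Finset (ZMod n) := {σ | σ * j ≠ 0 ∧ |(σ * j).valMinAbs| ≤ C}
  set T : Finset ℤ := (Icc (-(q : ℤ)) q).erase 0
  have hmaps : ∀ σ ∈ S, (σ * j).valMinAbs / d ∈ T := by
    intro σ hσ
    obtain ⟨hne, hle⟩ := (mem_filter_univ σ).1 hσ
    obtain ⟨t, ht⟩ := gcd_val_dvd_valMinAbs_mul σ j
    rw [ht, Int.mul_ediv_cancel_left _ hd, mem_erase, mem_Icc, ← abs_le]
    refine ⟨fun h => hne ?_, ?_⟩
    · rwa [h, mul_zero, valMinAbs_eq_zero] at ht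
    · rw [ht, abs_mul, Nat.abs_cast, mul_comm] at hle
      rw [Int.natCast_div]
      exact (Int.le_ediv_iff_mul_le (by omega)).2 hle
  have hfibres : ∀ t ∈ T, #{σ ∈ S | (σ * j).valMinAbs / d = t} ≤ d := by
    intro t _
    refine le_trans (card_le_card fun σ hσ => ?_) (card_mul_eq_le j ((t * d : ℤ) : ZMod n))
    rw [mem_filter_univ, ← (mem_filter.1 hσ).2,
      Int.ediv_mul_cancel (gcd_val_dvd_valMinAbs_mul σ j), coe_valMinAbs]
  have hT : #T = 2 * q := by
    rw [card_erase_of_mem (by simp), Int.card_Icc]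
    omega
  calc #S ≤ d * #T := card_le_mul_card_image_of_maps_to hmaps d hfibres
    _ = 2 * (d * (C / d)) := by rw [hT]; ring
    _ ≤ 2 * C := Nat.mul_le_mul_left 2 (Nat.mul_div_le C d)

theorem odd_val_add_one_iff (hn : Even n) (σ : ZMod n) : Odd (σ + 1).val ↔ ¬Odd σ.val := by
  have : Fact (1 < n) := ⟨by obtain ⟨k, rfl⟩ := hn; have := NeZero.pos (k + k); omega⟩
  rw [val_add, val_one, Nat.odd_iff, Nat.odd_iff, Nat.mod_mod_of_dvd _ (even_iff_two_dvd.1 hn)]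
  omega

theorem two_mul_card_filter_odd_val (hn : Even n) : 2 * #{σ : ZMod n | Odd σ.val} = n := by
  have hshift : #{σ : ZMod n | ¬Odd σ.val} = #{σ : ZMod n | Odd σ.val} := by
    refine card_equiv (Equiv.addRight 1) fun σ => ?_
    simp [odd_val_add_one_iff hn]
  have := card_filter_add_card_filter_not (s := (univ : Finset (ZMod n))) (fun σ => Odd σ.val)
  rw [hshift, card_univ, card] at this
  omega

theorem isUnit_of_odd_val {m : ℕ} {σ : ZMod (2 ^ m)} (hσ : Odd σ.val) : IsUnit σ := by
  rw [← natCast_zmod_val σ, isUnit_iff_coprime]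
  exact Nat.Coprime.pow_right m (Nat.coprime_two_right.2 hσ)

end ZMod

theorem odd_dilate_small_general (n : ℕ) [NeZero n] (hn : ∃ m : ℕ, n = 2 ^ m)
    (j : ZMod n) (hj : j ≠ 0) (C : ℕ) :
    ((Finset.univ.filter (fun σ : ZMod n =>
        Odd σ.val ∧ |(σ * j).valMinAbs| ≤ (C : ℤ))).card : ℝ) /
      ((Finset.univ.filter (fun σ : ZMod n => Odd σ.val)).card : ℝ)
    ≤ 4 * C / n := by
  obtain ⟨m, rfl⟩ := hn
  have hm : m ≠ 0 := by
    rintro rfl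
    exact hj (Subsingleton.elim (α := ZMod 1) j 0)
  have hodd : 2 * #{σ : ZMod (2 ^ m) | Odd σ.val} = 2 ^ m :=
    ZMod.two_mul_card_filter_odd_val ((Nat.even_pow' hm).2 even_two)
  have hsmall : #{σ : ZMod (2 ^ m) | Odd σ.val ∧ |(σ * j).valMinAbs| ≤ (C : ℤ)} ≤ 2 * C := by
    refine le_trans (card_le_card fun σ hσ => ?_) (ZMod.card_filter_mul_ne_zero_abs_valMinAbs_le j C)
    rw [mem_filter_univ] at hσ ⊢
    exact ⟨fun h => hj ((ZMod.isUnit_of_odd_val hσ.1).mul_right_eq_zero.1 h), hσ.2⟩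
  have hoddR : (2 : ℝ) * #{σ : ZMod (2 ^ m) | Odd σ.val} = (2 ^ m : ℕ) := by exact_mod_cast hodd
  have hsmallR : (#{σ : ZMod (2 ^ m) | Odd σ.val ∧ |(σ * j).valMinAbs| ≤ (C : ℤ)} : ℝ) ≤ 2 * C := by
    exact_mod_cast hsmall
  rw [← mul_div_mul_left _ _ (two_ne_zero' ℝ), hoddR]
  gcongr ?_ / _
  linarith

/-- for nonzero j and uniformly random odd σ in ZMod n (n a power of 2),
the probability that σ·j has a representative in [-C, C] is at most 4C/n. -/
theorem odd_dilate_small (n : ℕ) [NeZero n] (hn : ∃ m : ℕ, n = 2 ^ m)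
    (j : ZMod n) (hj : j ≠ 0) (C : ℕ) (hC : 1 ≤ C) :
    ((Finset.univ.filter (fun σ : ZMod n =>
        Odd σ.val ∧ |(σ * j).valMinAbs| ≤ (C : ℤ))).card : ℝ) /
      ((Finset.univ.filter (fun σ : ZMod n => Odd σ.val)).card : ℝ)
    ≤ 4 * C / n :=
  odd_dilate_small_general n hn j hj C
end

section
/- Let T ⊂ [m] be a set of t consecutive integers and β uniform over T. Then for any integer i ∈ [n] with i ≥ 1 and any set S ⊂ [n] of l consecutive integers (mod n), Pr[βi mod n ∈ S] ≤ ⌈im/n⌉(1 + ⌊l/i⌋)/t. -/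
/-!
The numbers `β i` with `β ∈ T ⊆ [1, m]` are multiples of `i` in `(0, i m]`, and `i m ≤ K n` for
`K = ⌈i m / n⌉`. The integers whose residue mod `n` lies in `S` form the translates `[c, c + l)`
of `[s, s + l)` by multiples of `n`, and each translate contains at most `⌊l / i⌋ + 1` multiples
of `i`. Up to `K + 1` translates meet `(0, i m]`, but the lowest and the highest are cut off by the
two ends: adding `i m`, which preserves divisibility by `i`, moves the multiples of the lowest one
into the highest one. Hence all of them fit in a window of `K` periods of length `n`, which
contains at most `K (⌊l / i⌋ + 1)` of them.
-/

open Finset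

section

variable {n i l s c y : ℤ}

lemma Int.emod_le_self_of_nonneg (hy : 0 ≤ y) (hn : 0 < n) : y % n ≤ y := by
  have := mul_nonneg hn.le (Int.ediv_nonneg hy hn.le)
  rw [Int.emod_def]
  linarith

lemma Int.ModEq.emod_sub_lt (hn : 0 < n) (hcs : c ≡ s [ZMOD n]) (hcy : c ≤ y)
    (hyc : y < c + l) : (y - s) % n < l := by
  rw [← hcs.sub_left y]
  linarith [Int.emod_le_self_of_nonneg (sub_nonneg.2 hcy) hn]

lemma Int.ModEq.lt_add_of_emod_sub_lt (hcs : c ≡ s [ZMOD n]) (hcy : c ≤ y) (hyc : y < c + n)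
    (h : (y - s) % n < l) : y < c + l := by
  rw [← hcs.sub_left y, Int.emod_eq_of_lt (sub_nonneg.2 hcy) (by linarith)] at h
  linarith

lemma Int.card_filter_dvd_Ico_add_le (hi : 0 < i) (hl : 0 ≤ l) (c : ℤ) :
    (#{y ∈ Ico c (c + l) | i ∣ y} : ℤ) ≤ l / i + 1 := by
  have hceil : ⌈(l : ℚ) / i⌉ ≤ l / i + 1 := by
    rw [Int.ceil_le, div_le_iff₀ (by exact_mod_cast hi)]
    exact_mod_cast (Int.lt_ediv_add_one_mul_self l hi).le
  rw [Int.Ico_filter_dvd_card _ _ hi, max_le_iff]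
  push_cast
  constructor
  · rw [add_div]
    linarith [Int.ceil_add_le ((c : ℚ) / i) ((l : ℚ) / i)]
  · linarith [Int.ediv_nonneg hl hi.le]

lemma Int.card_filter_dvd_emod_sub_lt_Ico_le (hn : 0 < n) (hi : 0 < i) (hl : 0 ≤ l)
    (hcs : c ≡ s [ZMOD n]) (K : ℕ) :
    (#{y ∈ Ico c (c + K * n) | i ∣ y ∧ (y - s) % n < l} : ℤ) ≤ K * (l / i + 1) := by
  induction K generalizing c with
  | zero => simp
  | succ K ih =>
    have hsplit :
        Ico c (c + (K + 1 : ℕ) * n) = Ico c (c + n) ∪ Ico (c + n) (c + n + K * n) := by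
      rw [Ico_union_Ico_eq_Ico (by linarith) (by nlinarith)]
      push_cast
      ring_nf
    have hfirst : {y ∈ Ico c (c + n) | i ∣ y ∧ (y - s) % n < l} ⊆
        {y ∈ Ico c (c + l) | i ∣ y} := by
      intro y hy
      simp only [mem_filter, mem_Ico] at hy ⊢
      exact ⟨⟨hy.1.1, hcs.lt_add_of_emod_sub_lt hy.1.1 hy.1.2 hy.2.2⟩, hy.2.1⟩
    rw [hsplit, filter_union]
    refine (Nat.cast_le.2 ((card_union_le _ _).trans
      (Nat.add_le_add_right (card_le_card hfirst) _))).trans ?_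
    push_cast
    linarith [Int.card_filter_dvd_Ico_add_le hi hl c,
      ih (c := c + n) (by simpa using hcs.add_right n)]

lemma Int.card_filter_dvd_emod_sub_lt_Ioc_le (hn : 0 < n) (hi : 0 < i) (hl : 0 ≤ l) {M : ℤ}
    {K : ℕ} (hiM : i ∣ M) (hMK : M ≤ K * n) :
    (#{y ∈ Ioc 0 M | i ∣ y ∧ (y - s) % n < l} : ℤ) ≤ K * (l / i + 1) := by
  -- `c` starts the highest translate of `[s, s + l)` meeting `(0, M]`, `w` starts the window
  obtain ⟨c, hcs, hcM, hMc⟩ : ∃ c, c ≡ s [ZMOD n] ∧ c ≤ M ∧ M < c + n := by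
    refine ⟨M - (M - s) % n, ?_, ?_, ?_⟩
    · rw [Int.modEq_iff_dvd]
      exact ⟨-((M - s) / n), by rw [Int.emod_def]; ring⟩
    · linarith [Int.emod_nonneg (M - s) hn.ne']
    · linarith [Int.emod_lt_of_pos (M - s) hn]
  set w := c + n - K * n with hw
  have hws : w ≡ s [ZMOD n] := (Int.modEq_iff_dvd.2 ⟨K - 1, by rw [hw]; ring⟩).trans hcs
  refine le_trans ?_ (Int.card_filter_dvd_emod_sub_lt_Ico_le hn hi hl hws K)
  refine Nat.cast_le.2 (card_le_card_of_injOn (fun y => if y < w then y + M else y) ?_ ?_)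
  · intro y hy
    rw [mem_coe, mem_filter, mem_Ioc] at hy
    rw [mem_coe, mem_filter, mem_Ico]
    obtain ⟨⟨hy0, hyM⟩, hiy, hys⟩ := hy
    dsimp only
    split_ifs with hyw
    · have hK : K ≠ 0 := by
        rintro rfl
        simp only [CharP.cast_eq_zero, zero_mul] at hMK
        linarith
      have hnK : n ≤ K * n :=
        le_mul_of_one_le_left hn.le (by exact_mod_cast Nat.one_le_iff_ne_zero.2 hK)
      have hlow : y < w - n + l :=
        (by simpa using hws.sub_right n : w - n ≡ s [ZMOD n]).lt_add_of_emod_sub_lt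
          (by linarith) (by linarith) hys
      exact ⟨⟨by linarith, by linarith⟩, dvd_add hiy hiM,
        hcs.emod_sub_lt hn (by linarith) (by linarith)⟩
    · exact ⟨⟨by linarith, by linarith⟩, hiy, hys⟩
  · intro a ha b hb hab
    rw [mem_coe, mem_filter, mem_Ioc] at ha hb
    dsimp only at hab
    split_ifs at hab <;> linarith

end

lemma Nat.intCast_sub_emod_lt_of_mod_mem_image_Ico {n s l x : ℕ} (hn : 0 < n)
    (h : x % n ∈ (Ico s (s + l)).image (· % n)) : ((x : ℤ) - s) % n < l := by
  obtain ⟨y, hy, hyx⟩ := mem_image.1 h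
  rw [mem_Ico] at hy
  have hxy : (x : ℤ) ≡ y [ZMOD n] := Int.natCast_modEq_iff.2 hyx.symm
  rw [hxy.sub_right s]
  exact (Int.ModEq.refl _).emod_sub_lt (by exact_mod_cast hn)
    (by exact_mod_cast hy.1) (by exact_mod_cast hy.2)

theorem unif_dilate_interval_general (n m t l i : ℕ) (hn : 0 < n)
    (hi : 1 ≤ i)
    (T : Finset ℕ)
    (hTm : T ⊆ Finset.Icc 1 m)
    (s : ℕ) (S : Finset ℕ) (hS : S = (Finset.Ico s (s + l)).image (· % n)) :
    ((T.filter (fun β => (β * i) % n ∈ S)).card : ℝ) / t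
      ≤ (⌈((i : ℝ) * m) / n⌉ * (1 + (l / i : ℕ))) / t := by
  subst hS
  have hnZ : (0 : ℤ) < n := by exact_mod_cast hn
  have hiZ : (0 : ℤ) < i := by exact_mod_cast hi
  set K := ⌈((i : ℝ) * m) / n⌉₊
  have hMK : (i * m : ℤ) ≤ K * n := by
    have : (i : ℝ) * m ≤ K * n := (div_le_iff₀ (by exact_mod_cast hn)).1 (Nat.le_ceil _)
    exact_mod_cast this
  have hdilate : #{β ∈ T | β * i % n ∈ (Ico s (s + l)).image (· % n)}
      ≤ #{y ∈ Ioc 0 (i * m : ℤ) | (i : ℤ) ∣ y ∧ (y - s) % n < l} := by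
    refine card_le_card_of_injOn (fun β : ℕ => (β : ℤ) * i) (fun β hβ => ?_)
      (fun β _ γ _ h => by exact_mod_cast mul_right_cancel₀ hiZ.ne' h)
    rw [mem_coe, mem_filter] at hβ
    have hβ1 : (1 : ℤ) ≤ β := by exact_mod_cast (mem_Icc.1 (hTm hβ.1)).1
    have hβm : (β : ℤ) ≤ m := by exact_mod_cast (mem_Icc.1 (hTm hβ.1)).2
    rw [mem_coe, mem_filter, mem_Ioc]
    refine ⟨⟨by nlinarith, by nlinarith⟩, dvd_mul_left _ _, ?_⟩
    simpa only [Nat.cast_mul] using Nat.intCast_sub_emod_lt_of_mod_mem_image_Ico hn hβ.2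
  have hcount := Int.card_filter_dvd_emod_sub_lt_Ioc_le (s := s) hnZ hiZ (Nat.cast_nonneg l)
    (dvd_mul_right _ _) hMK
  have hcard : (#{β ∈ T | β * i % n ∈ (Ico s (s + l)).image (· % n)} : ℤ)
      ≤ K * (1 + (l / i : ℕ)) := by
    push_cast
    linarith [(Nat.cast_le (α := ℤ)).2 hdilate]
  have hK : (K : ℝ) = ⌈((i : ℝ) * m) / n⌉ := natCast_ceil_eq_intCast_ceil (by positivity)
  rw [← hK]
  gcongr
  exact_mod_cast hcard

/-- for β uniform over t consecutive integers T ⊆ [m], and S an interval of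
l consecutive residues mod n, Pr[β·i mod n ∈ S] ≤ ⌈im/n⌉(1 + ⌊l/i⌋)/t. -/
theorem unif_dilate_interval (n m t l i : ℕ) (hn : 0 < n) (hm : 0 < m) (ht : 0 < t)
    (hl : 0 < l) (hi : 1 ≤ i) (hin : i ≤ n)
    (a : ℕ) (T : Finset ℕ) (hT : T = Finset.Ico a (a + t))
    (hTm : T ⊆ Finset.Icc 1 m)
    (s : ℕ) (S : Finset ℕ) (hS : S = (Finset.Ico s (s + l)).image (· % n)) :
    ((T.filter (fun β => (β * i) % n ∈ S)).card : ℝ) / t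
      ≤ (⌈((i : ℝ) * m) / n⌉ * (1 + (l / i : ℕ))) / t :=
  unif_dilate_interval_general n m t l i hn hi T hTm s S hS
end

section
/- Let f : ℝ → ℂ be a Schwartz function with continuous Fourier transform f̂(s) = ∫ e^{-2πist} f(t) dt. For a positive integer n, define g ∈ ℂ^n by g_t = √n · Σ_{j∈ℤ} f(t + nj) and g' ∈ ℂ^n by g'_t = Σ_{j∈ℤ} f̂(t/n + j). Then the n-dimensional DFT of g (with normalization ĝ_s = (1/√n) Σ_{t∈[n]} e^{-2πist/n} g_t) equals g'. -/
/-!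
Expanding `g` and regrouping `ℤ` into the residue classes `t + nℤ`, the left-hand side becomes
`∑_{m ∈ ℤ} e^{-2πi m s/n} f(m)`, because the phase `e^{-2πi m s/n}` is `n`-periodic in `m`.
Poisson summation for `𝓕 f` at the point `s/n`, together with `𝓕 (𝓕 f) (m) = f (-m)`, turns this
sum into `∑_{j ∈ ℤ} 𝓕 f (s/n + j)`.
-/

open Finset Complex MeasureTheory

open scoped SchwartzMap FourierTransform

theorem tsum_eq_sum_fin_tsum_mul_add {α : Type*} [AddCommGroup α] [UniformSpace α]
    [IsUniformAddGroup α] [CompleteSpace α] [T0Space α] (n : ℕ) [NeZero n] {c : ℤ → α}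
    (hc : Summable c) :
    ∑' m, c m = ∑ t : Fin n, ∑' j : ℤ, c (j * n + t) := by
  have hprod : Summable fun q : Fin n × ℤ => c (q.2 * n + q.1) :=
    (Equiv.prodComm _ _).summable_iff.mpr ((Int.divModEquiv n).symm.summable_iff.mpr hc)
  calc ∑' m, c m = ∑' p : ℤ × Fin n, c (p.1 * n + p.2) :=
        ((Int.divModEquiv n).symm.tsum_eq c).symm
    _ = ∑' q : Fin n × ℤ, c (q.2 * n + q.1) := ((Equiv.prodComm _ _).tsum_eq _).symm
    _ = ∑ t : Fin n, ∑' j : ℤ, c (j * n + t) := by rw [hprod.tsum_prod, tsum_fintype]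

theorem Summable.cexp_neg_two_pi_I_mul {u : ℤ → ℂ} (hu : Summable u) (x : ℝ) :
    Summable fun m : ℤ => cexp (-2 * Real.pi * I * x * m) * u m :=
  hu.norm.of_norm_bounded fun m => by simp [Complex.norm_exp]

theorem SchwartzMap.summable_comp_intCast {E : Type*} [NormedAddCommGroup E] [NormedSpace ℝ E]
    [CompleteSpace E] (f : 𝓢(ℝ, E)) : Summable fun m : ℤ => f m :=
  summable_of_isBigO (Real.summable_abs_int_rpow one_lt_two)
    ((f.isBigO_cocompact_rpow (-2)).comp_tendsto Int.tendsto_coe_cofinite)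

theorem SchwartzMap.fourier_fourier_apply {E : Type*} [NormedAddCommGroup E] [NormedSpace ℂ E]
    [CompleteSpace E] (f : 𝓢(ℝ, E)) (x : ℝ) :
    (𝓕 (𝓕 f) : 𝓢(ℝ, E)) x = f (-x) :=
  calc (𝓕 (𝓕 f) : 𝓢(ℝ, E)) x = 𝓕⁻ ⇑(𝓕 f : 𝓢(ℝ, E)) (-x) := by
        rw [fourier_coe, Real.fourierInv_eq_fourier_neg, neg_neg]
    _ = 𝓕⁻ (𝓕 f) (-x) := by rw [fourierInv_coe]
    _ = f (-x) := by rw [FourierTransform.fourierInv_fourier_eq]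

theorem SchwartzMap.tsum_fourier_add_int_eq_tsum_cexp_mul (f : 𝓢(ℝ, ℂ)) (x : ℝ) :
    ∑' j : ℤ, 𝓕 (f : ℝ → ℂ) (x + j) = ∑' m : ℤ, cexp (-2 * Real.pi * I * x * m) * f m := by
  rw [← fourier_coe, SchwartzMap.tsum_eq_tsum_fourier, ← (Equiv.neg ℤ).tsum_eq]
  refine tsum_congr fun m => ?_
  rw [SchwartzMap.fourier_fourier_apply, fourier_coe_apply, mul_comm, Equiv.neg_apply,
    Int.cast_neg, Int.cast_neg, neg_neg]
  push_cast
  ring_nf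

/-- discrete Poisson summation: the DFT of the periodization of a
Schwartz function equals the periodization of its continuous Fourier transform. -/
theorem poisson_summation_dft (n : ℕ) [NeZero n] (f : SchwartzMap ℝ ℂ)
    (g g' : Fin n → ℂ)
    (hg : ∀ t : Fin n, g t = Real.sqrt n * ∑' j : ℤ, f ((t : ℝ) + n * j))
    (hg' : ∀ t : Fin n, g' t = ∑' j : ℤ, FourierTransform.fourier (⇑f : ℝ → ℂ) ((t : ℝ) / n + j))
    (s : Fin n) :
    (1 / Real.sqrt n) *
        ∑ t : Fin n, Complex.exp (-2 * Real.pi * Complex.I * s * t / n) * g t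
      = g' s := by
  set c : ℤ → ℂ := fun m => cexp (-2 * Real.pi * I * ((s : ℝ) / n : ℝ) * m) * f m
  have hn : (n : ℂ) ≠ 0 := Nat.cast_ne_zero.mpr (NeZero.ne n)
  have hsqrt : (Real.sqrt n : ℂ) ≠ 0 := by
    exact_mod_cast (Real.sqrt_pos.mpr (Nat.cast_pos.mpr (Nat.pos_of_neZero n))).ne'
  have hperiodic (t : Fin n) (j : ℤ) :
      c (j * n + t) = cexp (-2 * Real.pi * I * s * t / n) * f ((t : ℝ) + n * j) := by
    have hphase : -2 * Real.pi * I * ((s : ℝ) / n : ℝ) * ((j * n + t : ℤ) : ℂ)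
        = -2 * Real.pi * I * s * t / n + (-(s * j) : ℤ) * (2 * Real.pi * I) := by
      push_cast
      field_simp
      ring
    simp only [c, hphase, exp_add, exp_int_mul_two_pi_mul_I, mul_one]
    push_cast
    ring_nf
  calc (1 / Real.sqrt n : ℂ) * ∑ t : Fin n, cexp (-2 * Real.pi * I * s * t / n) * g t
      = ∑ t : Fin n, ∑' j : ℤ, c (j * n + t) := by
        simp only [hperiodic, tsum_mul_left, hg, Finset.mul_sum]
        refine Finset.sum_congr rfl fun t _ => ?_
        field_simp
    _ = ∑' m : ℤ, c m :=
        (tsum_eq_sum_fin_tsum_mul_add n (f.summable_comp_intCast.cexp_neg_two_pi_I_mul _)).symm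
    _ = g' s := by rw [hg', f.tsum_fourier_add_int_eq_tsum_cexp_mul]
end
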